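/- arXiv:2203.12509 — 2 statements merged into one kernel-verified Lean document; each statement's English description precedes it below -/
import Mathlib

section
/- Let A, Y, S be binary and U finite-valued random variables on a discrete probability space, with positive conditioning probabilities throughout. Assume: (i) P(S=1 | A=a, Y=1, U=u) / P(S=1 | A=a, Y=0, U=u) = exp(h(u)) for both a ∈ {0,1}, for some function h; (ii) the conditional odds ratio [P(Y=1|A=1,U=u)·P(Y=0|A=0,U=u)] / [P(Y=1|A=0,U=u)·P(Y=0|A=1,U=u)] = exp(β₀′) for all u. Then the conditional odds ratio of Y on A within strata of U in the selected sample equals exp(β₀′): [P(Y=1|A=1,U=u,S=1)·P(Y=0|A=0,U=u,S=1)] / [P(Y=1|A=0,U=u,S=1)·P(Y=0|A=1,U=u,S=1)] = exp(β₀′) for all u. -/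
open scoped BigOperators
open Real

attribute [local instance] Classical.propDecidable

noncomputable section

variable {Ω : Type*}

/-- Probability of an event under weight function `P` on a finite sample space. -/
def pr [Fintype Ω] (P : Ω → ℝ) (E : Ω → Prop) : ℝ :=
  ∑ ω, if E ω then P ω else 0

/-- Conditional probability `P(E | F)`. -/
def cpr [Fintype Ω] (P : Ω → ℝ) (E F : Ω → Prop) : ℝ :=
  pr P (fun ω => E ω ∧ F ω) / pr P F

/-- Conditional expectation `E[f | F]`. -/
def cexp [Fintype Ω] (P : Ω → ℝ) (f : Ω → ℝ) (F : Ω → Prop) : ℝ :=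
  (∑ ω, if F ω then f ω * P ω else 0) / pr P F

/-- Conditional independence `f ⊥ g | h` under `P`. -/
def CondIndep [Fintype Ω] (P : Ω → ℝ) {α β γ : Type*}
    (f : Ω → α) (g : Ω → β) (h : Ω → γ) : Prop :=
  ∀ a b c, pr P (fun ω => h ω = c) ≠ 0 →
    cpr P (fun ω => f ω = a ∧ g ω = b) (fun ω => h ω = c) =
      cpr P (fun ω => f ω = a) (fun ω => h ω = c) *
        cpr P (fun ω => g ω = b) (fun ω => h ω = c)

lemma pr_congr [Fintype Ω] (P : Ω → ℝ) {E F : Ω → Prop} (h : ∀ ω, E ω ↔ F ω) :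
    pr P E = pr P F := by
  unfold pr
  exact Finset.sum_congr rfl fun ω _ => by rw [if_congr (h ω) rfl rfl]

lemma cpr_mul [Fintype Ω] (P : Ω → ℝ) (E F : Ω → Prop) (hF : pr P F ≠ 0) :
    cpr P E F * pr P F = pr P (fun ω => E ω ∧ F ω) := by
  unfold cpr
  exact div_mul_cancel₀ _ hF

/-- the conditional odds ratio is preserved under selection when
the infection-selection ratio does not depend on treatment (Assumption 2')
and the odds ratio is homogeneous (Assumption 3'). -/
theorem stmt11 [Fintype Ω] {𝒰 : Type*} [Fintype 𝒰]
    (P : Ω → ℝ) (hP : ∀ ω, 0 ≤ P ω) (hPsum : ∑ ω, P ω = 1)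
    (A Y S : Ω → ℕ) (U : Ω → 𝒰)
    (hA : ∀ ω, A ω = 0 ∨ A ω = 1) (hY : ∀ ω, Y ω = 0 ∨ Y ω = 1)
    (hS : ∀ ω, S ω = 0 ∨ S ω = 1)
    (hposU : ∀ (a y : ℕ) (u : 𝒰), (a = 0 ∨ a = 1) → (y = 0 ∨ y = 1) →
      pr P (fun ω => A ω = a ∧ Y ω = y ∧ U ω = u) ≠ 0 ∧
      pr P (fun ω => A ω = a ∧ U ω = u ∧ S ω = 1) ≠ 0 ∧
      cpr P (fun ω => Y ω = y) (fun ω => A ω = a ∧ U ω = u ∧ S ω = 1) ≠ 0 ∧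
      cpr P (fun ω => Y ω = y) (fun ω => A ω = a ∧ U ω = u) ≠ 0 ∧
      cpr P (fun ω => S ω = 1) (fun ω => A ω = a ∧ Y ω = y ∧ U ω = u) ≠ 0)
    (h : 𝒰 → ℝ)
    -- (i) selection ratio free of treatment
    (hsel : ∀ (a : ℕ) (u : 𝒰), (a = 0 ∨ a = 1) →
      cpr P (fun ω => S ω = 1) (fun ω => A ω = a ∧ Y ω = 1 ∧ U ω = u) /
        cpr P (fun ω => S ω = 1) (fun ω => A ω = a ∧ Y ω = 0 ∧ U ω = u) =
          Real.exp (h u))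
    (β₀' : ℝ)
    -- (ii) homogeneous odds ratio
    (hOR : ∀ u : 𝒰,
      cpr P (fun ω => Y ω = 1) (fun ω => A ω = 1 ∧ U ω = u) *
          cpr P (fun ω => Y ω = 0) (fun ω => A ω = 0 ∧ U ω = u) /
        (cpr P (fun ω => Y ω = 1) (fun ω => A ω = 0 ∧ U ω = u) *
          cpr P (fun ω => Y ω = 0) (fun ω => A ω = 1 ∧ U ω = u)) =
            Real.exp β₀') :
    ∀ u : 𝒰,
      cpr P (fun ω => Y ω = 1) (fun ω => A ω = 1 ∧ U ω = u ∧ S ω = 1) *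
          cpr P (fun ω => Y ω = 0) (fun ω => A ω = 0 ∧ U ω = u ∧ S ω = 1) /
        (cpr P (fun ω => Y ω = 1) (fun ω => A ω = 0 ∧ U ω = u ∧ S ω = 1) *
          cpr P (fun ω => Y ω = 0) (fun ω => A ω = 1 ∧ U ω = u ∧ S ω = 1)) =
            Real.exp β₀' := by
  intro u
  obtain ⟨hp00, hr0, hc00, hd00, hq00⟩ := hposU 0 0 u (Or.inl rfl) (Or.inl rfl)
  obtain ⟨hp01, -, hc01, hd01, hq01⟩ := hposU 0 1 u (Or.inl rfl) (Or.inr rfl)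
  obtain ⟨hp10, hr1, hc10, hd10, hq10⟩ := hposU 1 0 u (Or.inr rfl) (Or.inl rfl)
  obtain ⟨hp11, -, hc11, hd11, hq11⟩ := hposU 1 1 u (Or.inr rfl) (Or.inr rfl)
  -- notation
  set c11 := cpr P (fun ω => Y ω = 1) (fun ω => A ω = 1 ∧ U ω = u ∧ S ω = 1) with hC11
  set c00 := cpr P (fun ω => Y ω = 0) (fun ω => A ω = 0 ∧ U ω = u ∧ S ω = 1) with hC00
  set c01 := cpr P (fun ω => Y ω = 1) (fun ω => A ω = 0 ∧ U ω = u ∧ S ω = 1) with hC01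
  set c10 := cpr P (fun ω => Y ω = 0) (fun ω => A ω = 1 ∧ U ω = u ∧ S ω = 1) with hC10
  set d11 := cpr P (fun ω => Y ω = 1) (fun ω => A ω = 1 ∧ U ω = u) with hD11
  set d00 := cpr P (fun ω => Y ω = 0) (fun ω => A ω = 0 ∧ U ω = u) with hD00
  set d01 := cpr P (fun ω => Y ω = 1) (fun ω => A ω = 0 ∧ U ω = u) with hD01
  set d10 := cpr P (fun ω => Y ω = 0) (fun ω => A ω = 1 ∧ U ω = u) with hD10
  set q11 := cpr P (fun ω => S ω = 1) (fun ω => A ω = 1 ∧ Y ω = 1 ∧ U ω = u) with hQ11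
  set q00 := cpr P (fun ω => S ω = 1) (fun ω => A ω = 0 ∧ Y ω = 0 ∧ U ω = u) with hQ00
  set q01 := cpr P (fun ω => S ω = 1) (fun ω => A ω = 0 ∧ Y ω = 1 ∧ U ω = u) with hQ01
  set q10 := cpr P (fun ω => S ω = 1) (fun ω => A ω = 1 ∧ Y ω = 0 ∧ U ω = u) with hQ10
  set r0 := pr P (fun ω => A ω = 0 ∧ U ω = u ∧ S ω = 1) with hR0
  set r1 := pr P (fun ω => A ω = 1 ∧ U ω = u ∧ S ω = 1) with hR1
  set m0 := pr P (fun ω => A ω = 0 ∧ U ω = u) with hM0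
  set m1 := pr P (fun ω => A ω = 1 ∧ U ω = u) with hM1
  have hm0 : m0 ≠ 0 := by
    intro h0; apply hd00; rw [hD00]; unfold cpr; rw [← hM0, h0, div_zero]
  have hm1 : m1 ≠ 0 := by
    intro h0; apply hd10; rw [hD10]; unfold cpr; rw [← hM1, h0, div_zero]
  -- key identity: c * r = q * (d * m) for each (a, y)
  have key : ∀ (a y : ℕ),
      pr P (fun ω => A ω = a ∧ U ω = u ∧ S ω = 1) ≠ 0 →
      pr P (fun ω => A ω = a ∧ U ω = u) ≠ 0 →
      pr P (fun ω => A ω = a ∧ Y ω = y ∧ U ω = u) ≠ 0 →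
      cpr P (fun ω => Y ω = y) (fun ω => A ω = a ∧ U ω = u ∧ S ω = 1) *
        pr P (fun ω => A ω = a ∧ U ω = u ∧ S ω = 1) =
      cpr P (fun ω => S ω = 1) (fun ω => A ω = a ∧ Y ω = y ∧ U ω = u) *
        (cpr P (fun ω => Y ω = y) (fun ω => A ω = a ∧ U ω = u) *
          pr P (fun ω => A ω = a ∧ U ω = u)) := by
    intro a y hr hm hp
    calc cpr P (fun ω => Y ω = y) (fun ω => A ω = a ∧ U ω = u ∧ S ω = 1) *
          pr P (fun ω => A ω = a ∧ U ω = u ∧ S ω = 1)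
        = pr P (fun ω => Y ω = y ∧ (A ω = a ∧ U ω = u ∧ S ω = 1)) := cpr_mul _ _ _ hr
      _ = pr P (fun ω => S ω = 1 ∧ (A ω = a ∧ Y ω = y ∧ U ω = u)) :=
          pr_congr P (fun ω => by tauto)
      _ = cpr P (fun ω => S ω = 1) (fun ω => A ω = a ∧ Y ω = y ∧ U ω = u) *
            pr P (fun ω => A ω = a ∧ Y ω = y ∧ U ω = u) := (cpr_mul _ _ _ hp).symm
      _ = cpr P (fun ω => S ω = 1) (fun ω => A ω = a ∧ Y ω = y ∧ U ω = u) *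
            (cpr P (fun ω => Y ω = y) (fun ω => A ω = a ∧ U ω = u) *
              pr P (fun ω => A ω = a ∧ U ω = u)) := by
          rw [cpr_mul _ _ _ hm]
          exact congrArg _ (pr_congr P (fun ω => by tauto))
  have k11 : c11 * r1 = q11 * (d11 * m1) := key 1 1 hr1 hm1 hp11
  have k00 : c00 * r0 = q00 * (d00 * m0) := key 0 0 hr0 hm0 hp00
  have k01 : c01 * r0 = q01 * (d01 * m0) := key 0 1 hr0 hm0 hp01
  have k10 : c10 * r1 = q10 * (d10 * m1) := key 1 0 hr1 hm1 hp10
  -- selection assumption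
  have hs1 : q11 = Real.exp (h u) * q10 := by
    have := hsel 1 u (Or.inr rfl)
    rw [← hQ11, ← hQ10, div_eq_iff hq10] at this
    linarith [this]
  have hs0 : q01 = Real.exp (h u) * q00 := by
    have := hsel 0 u (Or.inl rfl)
    rw [← hQ01, ← hQ00, div_eq_iff hq00] at this
    linarith [this]
  -- odds ratio assumption
  have hor : d11 * d00 = Real.exp β₀' * (d01 * d10) := by
    have := hOR u
    rw [← hD11, ← hD00, ← hD01, ← hD10, div_eq_iff (mul_ne_zero hd01 hd10)] at this
    linarith [this]
  -- conclude
  rw [div_eq_iff (mul_ne_zero hc01 hc10)]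
  have hE : Real.exp (h u) ≠ 0 := Real.exp_ne_zero _
  have hmain : (c11 * r1) * (c00 * r0) = Real.exp β₀' * ((c01 * r0) * (c10 * r1)) := by
    rw [k11, k00, k01, k10, hs1, hs0]
    linear_combination (Real.exp (h u) * q10 * q00 * m1 * m0) * hor
  have : (c11 * c00) * (r1 * r0) = (Real.exp β₀' * (c01 * c10)) * (r1 * r0) := by
    ring_nf
    ring_nf at hmain
    linarith [hmain]
  exact mul_right_cancel₀ (mul_ne_zero hr1 hr0) this
end
end

section
/- Let A, Y, S, Z, U be random variables on a discrete probability space (A, Y, S binary; Z, U finite-valued), all conditioning events positive. Suppose: (i) Z ⊥ (Y, S) | (A, U); (ii) S ⊥ A | (Y, U); (iii) q satisfies E[q(a, Z) | A=a, U=u] = 1/P(A=a | U=u); (iv) q* satisfies (1−η)/P(A=a|U=u) < E[q*(a, Z) | A=a, U=u] < 1/[(1−η)·P(A=a|U=u)] for all a, u, for some η ∈ (0,1). Define β* = log( E[q*(A,Z)·A·Y | S=1] / E[q*(A,Z)·(1−A)·Y | S=1] ) and β = log( E[q(A,Z)·A·Y | S=1] / E[q(A,Z)·(1−A)·Y | S=1]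 ), assuming all four expectations are positive. Then 2·log(1−η) < β* − β < −2·log(1−η). -/
open scoped BigOperators
open Real

attribute [local instance] Classical.propDecidable

noncomputable section

variable {Ω : Type*}

/-! Conditionally on `(A, U)`, `Z` is independent of the selection event `{Y = 1, S = 1}`, so the
`q*`-weighted mass of that event in arm `a` is
`∑ᵤ E[q*(a, Z) | A = a, U = u] · P(Y = 1, S = 1, A = a, U = u)`, and likewise for `q`.
By (iii) and (iv) the two conditional means differ by a factor in `(1 - η, (1 - η)⁻¹)` for every
`u`, hence so do the two arm masses; the risk ratio is a quotient of two arm masses, which gives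
the factor `(1 - η)²` on the log scale. -/

section Weighted

variable [Fintype Ω] {P : Ω → ℝ}

-- `E[f; F]`, the numerator of `cexp P f F`.
def wsum (P : Ω → ℝ) (f : Ω → ℝ) (E : Ω → Prop) : ℝ :=
  ∑ ω, if E ω then f ω * P ω else 0

theorem cexp_eq_wsum_div (f : Ω → ℝ) (F : Ω → Prop) : cexp P f F = wsum P f F / pr P F := rfl

theorem pr_nonneg (hP : ∀ ω, 0 ≤ P ω) (E : Ω → Prop) : 0 ≤ pr P E :=
  Finset.sum_nonneg fun ω _ => by split_ifs <;> simp [hP ω]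

theorem pr_mono (hP : ∀ ω, 0 ≤ P ω) {E F : Ω → Prop} (h : ∀ ω, E ω → F ω) :
    pr P E ≤ pr P F :=
  Finset.sum_le_sum fun ω _ => by
    by_cases hE : E ω
    · simp [hE, h ω hE]
    · by_cases hF : F ω <;> simp [hE, hF, hP ω]

theorem pr_eq_zero_of_imp (hP : ∀ ω, 0 ≤ P ω) {E F : Ω → Prop} (h : ∀ ω, E ω → F ω)
    (hF : pr P F = 0) : pr P E = 0 :=
  le_antisymm (hF ▸ pr_mono hP h) (pr_nonneg hP E)

theorem wsum_eq_zero_of_imp (hP : ∀ ω, 0 ≤ P ω) {f : Ω → ℝ} {E F : Ω → Prop}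
    (h : ∀ ω, E ω → F ω) (hF : pr P F = 0) : wsum P f E = 0 := by
  have hnull : ∀ ω, F ω → P ω = 0 := fun ω hω => by
    simpa [hω] using (Finset.sum_eq_zero_iff_of_nonneg fun x _ => by
      split_ifs <;> simp [hP x]).1 hF ω (Finset.mem_univ ω)
  refine Finset.sum_eq_zero fun ω _ => ?_
  split_ifs with hE
  · rw [hnull ω (h ω hE), mul_zero]
  · rfl

theorem wsum_eq_sum_fiber {γ : Type*} [Fintype γ] (f : Ω → ℝ) (E : Ω → Prop) (k : Ω → γ) :
    wsum P f E = ∑ d, wsum P f (fun ω => E ω ∧ k ω = d) := by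
  unfold wsum
  rw [Finset.sum_comm]
  refine Finset.sum_congr rfl fun ω _ => ?_
  by_cases hE : E ω <;> simp [hE]

theorem wsum_comp_eq_sum {α : Type*} [Fintype α] (f : Ω → α) (φ : α → ℝ) (E : Ω → Prop) :
    wsum P (fun ω => φ (f ω)) E = ∑ x, φ x * pr P (fun ω => f ω = x ∧ E ω) := by
  simp only [wsum, pr, Finset.mul_sum, mul_ite, mul_zero]
  rw [Finset.sum_comm]
  refine Finset.sum_congr rfl fun ω _ => ?_
  by_cases hE : E ω <;> simp [hE]

end Weighted

theorem Finset.sum_mul_lt_sum_mul_of_exists_ne_zero {ι : Type*} [Fintype ι] {c x y : ι → ℝ}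
    (hc : ∀ i, 0 ≤ c i) (hxy : ∀ i, c i ≠ 0 → x i < y i) (hne : ∃ i, c i ≠ 0) :
    ∑ i, x i * c i < ∑ i, y i * c i := by
  obtain ⟨j, hj⟩ := hne
  refine Finset.sum_lt_sum (fun i _ => ?_) ⟨j, Finset.mem_univ j, ?_⟩
  · rcases eq_or_ne (c i) 0 with hi | hi
    · simp [hi]
    · exact mul_le_mul_of_nonneg_right (hxy i hi).le (hc i)
  · exact mul_lt_mul_of_pos_right (hxy j hj) ((hc j).lt_of_ne' hj)

namespace CondIndep

variable [Fintype Ω] {P : Ω → ℝ} {α β γ δ : Type*} [Fintype α]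

theorem wsum_comp_eq_cexp_mul_pr (hP : ∀ ω, 0 ≤ P ω) {f : Ω → α} {g : Ω → β} {h : Ω → γ}
    (hi : CondIndep P f g h) (φ : α → ℝ) (b : β) (c : γ) :
    wsum P (fun ω => φ (f ω)) (fun ω => g ω = b ∧ h ω = c) =
      cexp P (fun ω => φ (f ω)) (fun ω => h ω = c) * pr P (fun ω => g ω = b ∧ h ω = c) := by
  by_cases hc : pr P (fun ω => h ω = c) = 0
  · rw [wsum_eq_zero_of_imp hP (fun ω hω => hω.2) hc, cexp, hc, div_zero, zero_mul]
  rw [cexp_eq_wsum_div, wsum_comp_eq_sum, wsum_comp_eq_sum, Finset.sum_div, Finset.sum_mul]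
  refine Finset.sum_congr rfl fun x _ => ?_
  have hfactor := hi x b c hc
  simp only [cpr, and_assoc] at hfactor
  field_simp at hfactor ⊢
  linear_combination φ x * hfactor

theorem wsum_eq_sum_cexp_mul_pr [Fintype δ] (hP : ∀ ω, 0 ≤ P ω) {f : Ω → α} {g : Ω → β}
    {h : Ω → γ} {k : Ω → δ} (hi : CondIndep P f g (fun ω => (h ω, k ω))) (φ : α → ℝ) (b : β)
    (c : γ) :
    wsum P (fun ω => φ (f ω)) (fun ω => g ω = b ∧ h ω = c) =
      ∑ d, cexp P (fun ω => φ (f ω)) (fun ω => h ω = c ∧ k ω = d) *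
        pr P (fun ω => g ω = b ∧ h ω = c ∧ k ω = d) := by
  rw [wsum_eq_sum_fiber _ _ k]
  refine Finset.sum_congr rfl fun d _ => ?_
  simpa only [Prod.mk.injEq, and_assoc] using hi.wsum_comp_eq_cexp_mul_pr hP φ b (c, d)

theorem wsum_bounds_of_cexp_bounds [Fintype δ] (hP : ∀ ω, 0 ≤ P ω) {f : Ω → α} {g : Ω → β}
    {h : Ω → γ} {k : Ω → δ} (hi : CondIndep P f g (fun ω => (h ω, k ω))) {φ ψ : α → ℝ} {t : ℝ}
    (b : β) (c : γ)
    (hb : ∀ d, pr P (fun ω => h ω = c ∧ k ω = d) ≠ 0 →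
      t * cexp P (fun ω => φ (f ω)) (fun ω => h ω = c ∧ k ω = d) <
          cexp P (fun ω => ψ (f ω)) (fun ω => h ω = c ∧ k ω = d) ∧
        cexp P (fun ω => ψ (f ω)) (fun ω => h ω = c ∧ k ω = d) <
          t⁻¹ * cexp P (fun ω => φ (f ω)) (fun ω => h ω = c ∧ k ω = d))
    (hne : wsum P (fun ω => φ (f ω)) (fun ω => g ω = b ∧ h ω = c) ≠ 0) :
    t * wsum P (fun ω => φ (f ω)) (fun ω => g ω = b ∧ h ω = c) <
        wsum P (fun ω => ψ (f ω)) (fun ω => g ω = b ∧ h ω = c) ∧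
      wsum P (fun ω => ψ (f ω)) (fun ω => g ω = b ∧ h ω = c) <
        t⁻¹ * wsum P (fun ω => φ (f ω)) (fun ω => g ω = b ∧ h ω = c) := by
  rw [hi.wsum_eq_sum_cexp_mul_pr hP] at hne ⊢
  rw [hi.wsum_eq_sum_cexp_mul_pr hP, Finset.mul_sum, Finset.mul_sum]
  simp only [← mul_assoc]
  have hC : ∀ d, 0 ≤ pr P (fun ω => g ω = b ∧ h ω = c ∧ k ω = d) := fun d => pr_nonneg hP _
  have hbd : ∀ d, pr P (fun ω => g ω = b ∧ h ω = c ∧ k ω = d) ≠ 0 → _ := fun d hd =>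
    hb d fun h0 => hd (pr_eq_zero_of_imp hP (fun ω hω => hω.2) h0)
  obtain ⟨d, -, hd⟩ := Finset.exists_ne_zero_of_sum_ne_zero hne
  have hex : ∃ d, pr P (fun ω => g ω = b ∧ h ω = c ∧ k ω = d) ≠ 0 := ⟨d, right_ne_zero_of_mul hd⟩
  exact ⟨Finset.sum_mul_lt_sum_mul_of_exists_ne_zero hC (fun d hd => (hbd d hd).1) hex,
    Finset.sum_mul_lt_sum_mul_of_exists_ne_zero hC (fun d hd => (hbd d hd).2) hex⟩

end CondIndep

section Binary

variable [Fintype Ω] {P : Ω → ℝ} {α : Type*} {A Y : Ω → ℕ}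

theorem wsum_treated_eq (hA : ∀ ω, A ω = 0 ∨ A ω = 1) (hY : ∀ ω, Y ω = 0 ∨ Y ω = 1)
    (g : ℕ → α → ℝ) (Z : Ω → α) (S : Ω → ℕ) :
    wsum P (fun ω => g (A ω) (Z ω) * (A ω : ℝ) * (Y ω : ℝ)) (fun ω => S ω = 1) =
      wsum P (fun ω => g 1 (Z ω)) (fun ω => (Y ω, S ω) = (1, 1) ∧ A ω = 1) := by
  refine Finset.sum_congr rfl fun ω _ => ?_
  rcases hA ω with hA' | hA' <;> rcases hY ω with hY' | hY' <;> by_cases hS : S ω = 1 <;>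
    simp [hA', hY', hS]

theorem wsum_control_eq (hA : ∀ ω, A ω = 0 ∨ A ω = 1) (hY : ∀ ω, Y ω = 0 ∨ Y ω = 1)
    (g : ℕ → α → ℝ) (Z : Ω → α) (S : Ω → ℕ) :
    wsum P (fun ω => g (A ω) (Z ω) * (1 - (A ω : ℝ)) * (Y ω : ℝ)) (fun ω => S ω = 1) =
      wsum P (fun ω => g 0 (Z ω)) (fun ω => (Y ω, S ω) = (1, 1) ∧ A ω = 0) := by
  refine Finset.sum_congr rfl fun ω _ => ?_
  rcases hA ω with hA' | hA' <;> rcases hY ω with hY' | hY' <;> by_cases hS : S ω = 1 <;>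
    simp [hA', hY', hS]

end Binary

theorem log_div_sub_log_div_bounds {t x₁ x₀ y₁ y₀ : ℝ} (ht : 0 < t) (hy₁ : 0 < y₁) (hy₀ : 0 < y₀)
    (hl₁ : t * y₁ < x₁) (hu₁ : x₁ < t⁻¹ * y₁) (hl₀ : t * y₀ < x₀) (hu₀ : x₀ < t⁻¹ * y₀) :
    2 * log t < log (x₁ / x₀) - log (y₁ / y₀) ∧ log (x₁ / x₀) - log (y₁ / y₀) < -(2 * log t) := by
  have hx₁ : 0 < x₁ := (mul_pos ht hy₁).trans hl₁
  have hx₀ : 0 < x₀ := (mul_pos ht hy₀).trans hl₀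
  have L₁ := log_lt_log (mul_pos ht hy₁) hl₁
  have U₁ := log_lt_log hx₁ hu₁
  have L₀ := log_lt_log (mul_pos ht hy₀) hl₀
  have U₀ := log_lt_log hx₀ hu₀
  rw [log_mul ht.ne' hy₁.ne'] at L₁
  rw [log_mul ht.ne' hy₀.ne'] at L₀
  rw [log_mul (inv_ne_zero ht.ne') hy₁.ne', log_inv] at U₁
  rw [log_mul (inv_ne_zero ht.ne') hy₀.ne', log_inv] at U₀
  rw [log_div hx₁.ne' hx₀.ne', log_div hy₁.ne' hy₀.ne']
  constructor <;> linarith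

theorem stmt19_general [Fintype Ω] {𝒵 𝒰 : Type*} [Fintype 𝒵] [Fintype 𝒰]
    (P : Ω → ℝ) (hP : ∀ ω, 0 ≤ P ω)
    (A Y S : Ω → ℕ) (Z : Ω → 𝒵) (U : Ω → 𝒰)
    (hA : ∀ ω, A ω = 0 ∨ A ω = 1) (hY : ∀ ω, Y ω = 0 ∨ Y ω = 1)
    -- (i) Z ⊥ (Y, S) | (A, U)
    (hZ : CondIndep P Z (fun ω => (Y ω, S ω)) (fun ω => (A ω, U ω)))
    -- (iii) exact bridge function
    (q : ℕ → 𝒵 → ℝ)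
    (hq : ∀ (a : ℕ) (u : 𝒰), (a = 0 ∨ a = 1) →
      pr P (fun ω => A ω = a ∧ U ω = u) ≠ 0 →
      cexp P (fun ω => q a (Z ω)) (fun ω => A ω = a ∧ U ω = u) =
        (cpr P (fun ω => A ω = a) (fun ω => U ω = u))⁻¹)
    -- (iv) approximate bridge function
    (η : ℝ) (hη : 0 < η ∧ η < 1)
    (qstar : ℕ → 𝒵 → ℝ)
    (hqstar : ∀ (a : ℕ) (u : 𝒰), (a = 0 ∨ a = 1) →
      pr P (fun ω => A ω = a ∧ U ω = u) ≠ 0 →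
      (1 - η) / cpr P (fun ω => A ω = a) (fun ω => U ω = u) <
          cexp P (fun ω => qstar a (Z ω)) (fun ω => A ω = a ∧ U ω = u) ∧
        cexp P (fun ω => qstar a (Z ω)) (fun ω => A ω = a ∧ U ω = u) <
          1 / ((1 - η) * cpr P (fun ω => A ω = a) (fun ω => U ω = u)))
    -- positivity of the four moments
    (h3 : 0 < cexp P (fun ω => q (A ω) (Z ω) * (A ω : ℝ) * (Y ω : ℝ))
      (fun ω => S ω = 1))
    (h4 : 0 < cexp P (fun ω => q (A ω) (Z ω) * (1 - (A ω : ℝ)) * (Y ω : ℝ))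
      (fun ω => S ω = 1)) :
    2 * Real.log (1 - η) <
        Real.log
            (cexp P (fun ω => qstar (A ω) (Z ω) * (A ω : ℝ) * (Y ω : ℝ))
                (fun ω => S ω = 1) /
              cexp P (fun ω => qstar (A ω) (Z ω) * (1 - (A ω : ℝ)) * (Y ω : ℝ))
                (fun ω => S ω = 1)) -
          Real.log
            (cexp P (fun ω => q (A ω) (Z ω) * (A ω : ℝ) * (Y ω : ℝ))
                (fun ω => S ω = 1) /
              cexp P (fun ω => q (A ω) (Z ω) * (1 - (A ω : ℝ)) * (Y ω : ℝ))
                (fun ω => S ω = 1)) ∧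
      Real.log
            (cexp P (fun ω => qstar (A ω) (Z ω) * (A ω : ℝ) * (Y ω : ℝ))
                (fun ω => S ω = 1) /
              cexp P (fun ω => qstar (A ω) (Z ω) * (1 - (A ω : ℝ)) * (Y ω : ℝ))
                (fun ω => S ω = 1)) -
          Real.log
            (cexp P (fun ω => q (A ω) (Z ω) * (A ω : ℝ) * (Y ω : ℝ))
                (fun ω => S ω = 1) /
              cexp P (fun ω => q (A ω) (Z ω) * (1 - (A ω : ℝ)) * (Y ω : ℝ))
                (fun ω => S ω = 1)) <
        -(2 * Real.log (1 - η)) := by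
  have h1η : 0 < 1 - η := sub_pos.2 hη.2
  simp only [cexp_eq_wsum_div, wsum_treated_eq hA hY, wsum_control_eq hA hY] at h3 h4 ⊢
  have hS1 : 0 < pr P (fun ω => S ω = 1) :=
    (pr_nonneg hP _).lt_of_ne' fun h0 => by simp [h0] at h3
  rw [div_pos_iff_of_pos_right hS1] at h3 h4
  rw [div_div_div_cancel_right₀ hS1.ne', div_div_div_cancel_right₀ hS1.ne']
  have hbridge : ∀ a, a = 0 ∨ a = 1 → ∀ u, pr P (fun ω => A ω = a ∧ U ω = u) ≠ 0 →
      (1 - η) * cexp P (fun ω => q a (Z ω)) (fun ω => A ω = a ∧ U ω = u) <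
          cexp P (fun ω => qstar a (Z ω)) (fun ω => A ω = a ∧ U ω = u) ∧
        cexp P (fun ω => qstar a (Z ω)) (fun ω => A ω = a ∧ U ω = u) <
          (1 - η)⁻¹ * cexp P (fun ω => q a (Z ω)) (fun ω => A ω = a ∧ U ω = u) := by
    intro a ha u hu
    rw [hq a u ha hu, ← div_eq_mul_inv, ← mul_inv, ← one_div]
    exact hqstar a u ha hu
  obtain ⟨hl₁, hu₁⟩ := hZ.wsum_bounds_of_cexp_bounds hP (1, 1) 1 (hbridge 1 (Or.inr rfl)) h3.ne'
  obtain ⟨hl₀, hu₀⟩ := hZ.wsum_bounds_of_cexp_bounds hP (1, 1) 0 (hbridge 0 (Or.inl rfl)) h4.ne'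
  exact log_div_sub_log_div_bounds h1η h3 h4 hl₁ hu₁ hl₀ hu₀

/-- Appendix K bias bound: an approximate bridge function `q*`
yields a plug-in log risk ratio within `−2·log(1−η)` of the exact one. -/
theorem stmt19 [Fintype Ω] {𝒵 𝒰 : Type*} [Fintype 𝒵] [Fintype 𝒰]
    (P : Ω → ℝ) (hP : ∀ ω, 0 ≤ P ω) (hPsum : ∑ ω, P ω = 1)
    (A Y S : Ω → ℕ) (Z : Ω → 𝒵) (U : Ω → 𝒰)
    (hA : ∀ ω, A ω = 0 ∨ A ω = 1) (hY : ∀ ω, Y ω = 0 ∨ Y ω = 1)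
    (hS : ∀ ω, S ω = 0 ∨ S ω = 1)
    (hsel : pr P (fun ω => S ω = 1) ≠ 0)
    -- (i) Z ⊥ (Y, S) | (A, U)
    (hZ : CondIndep P Z (fun ω => (Y ω, S ω)) (fun ω => (A ω, U ω)))
    -- (ii) S ⊥ A | (Y, U)
    (hSA : CondIndep P S A (fun ω => (Y ω, U ω)))
    -- (iii) exact bridge function
    (q : ℕ → 𝒵 → ℝ)
    (hq : ∀ (a : ℕ) (u : 𝒰), (a = 0 ∨ a = 1) →
      pr P (fun ω => A ω = a ∧ U ω = u) ≠ 0 →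
      cexp P (fun ω => q a (Z ω)) (fun ω => A ω = a ∧ U ω = u) =
        (cpr P (fun ω => A ω = a) (fun ω => U ω = u))⁻¹)
    -- (iv) approximate bridge function
    (η : ℝ) (hη : 0 < η ∧ η < 1)
    (qstar : ℕ → 𝒵 → ℝ)
    (hqstar : ∀ (a : ℕ) (u : 𝒰), (a = 0 ∨ a = 1) →
      pr P (fun ω => A ω = a ∧ U ω = u) ≠ 0 →
      (1 - η) / cpr P (fun ω => A ω = a) (fun ω => U ω = u) <
          cexp P (fun ω => qstar a (Z ω)) (fun ω => A ω = a ∧ U ω = u) ∧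
        cexp P (fun ω => qstar a (Z ω)) (fun ω => A ω = a ∧ U ω = u) <
          1 / ((1 - η) * cpr P (fun ω => A ω = a) (fun ω => U ω = u)))
    -- positivity of the four moments
    (h1 : 0 < cexp P (fun ω => qstar (A ω) (Z ω) * (A ω : ℝ) * (Y ω : ℝ))
      (fun ω => S ω = 1))
    (h2 : 0 < cexp P (fun ω => qstar (A ω) (Z ω) * (1 - (A ω : ℝ)) * (Y ω : ℝ))
      (fun ω => S ω = 1))
    (h3 : 0 < cexp P (fun ω => q (A ω) (Z ω) * (A ω : ℝ) * (Y ω : ℝ))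
      (fun ω => S ω = 1))
    (h4 : 0 < cexp P (fun ω => q (A ω) (Z ω) * (1 - (A ω : ℝ)) * (Y ω : ℝ))
      (fun ω => S ω = 1)) :
    2 * Real.log (1 - η) <
        Real.log
            (cexp P (fun ω => qstar (A ω) (Z ω) * (A ω : ℝ) * (Y ω : ℝ))
                (fun ω => S ω = 1) /
              cexp P (fun ω => qstar (A ω) (Z ω) * (1 - (A ω : ℝ)) * (Y ω : ℝ))
                (fun ω => S ω = 1)) -
          Real.log
            (cexp P (fun ω => q (A ω) (Z ω) * (A ω : ℝ) * (Y ω : ℝ))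
                (fun ω => S ω = 1) /
              cexp P (fun ω => q (A ω) (Z ω) * (1 - (A ω : ℝ)) * (Y ω : ℝ))
                (fun ω => S ω = 1)) ∧
      Real.log
            (cexp P (fun ω => qstar (A ω) (Z ω) * (A ω : ℝ) * (Y ω : ℝ))
                (fun ω => S ω = 1) /
              cexp P (fun ω => qstar (A ω) (Z ω) * (1 - (A ω : ℝ)) * (Y ω : ℝ))
                (fun ω => S ω = 1)) -
          Real.log
            (cexp P (fun ω => q (A ω) (Z ω) * (A ω : ℝ) * (Y ω : ℝ))
                (fun ω => S ω = 1) /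
              cexp P (fun ω => q (A ω) (Z ω) * (1 - (A ω : ℝ)) * (Y ω : ℝ))
                (fun ω => S ω = 1)) <
        -(2 * Real.log (1 - η)) :=
  stmt19_general P hP A Y S Z U hA hY hZ q hq η hη qstar hqstar h3 h4
end
end
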